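/- Let q be a prime power with q ≥ r + 1, and M a constant rank r subspace of M_n(F_q) with 1 ≤ r < n and dim M = n + 1. Then summing (q^{r(u)} − 1) over all nonzero u ∈ F_q^n, where r(u) = dim {A ∈ M : Au = 0}, yields (q^{n+1} − 1)(q^{n−r} − 1); this leads to a contradiction, so no such M exists. -/

import Mathlib

def mulVecRight (K : Type*) [Field K] (n : ℕ) (u : Fin n → K) :
    Matrix (Fin n) (Fin n) K →ₗ[K] (Fin n → K) where
  toFun A := A.mulVec u
  map_add' A B := Matrix.add_mulVec A B u
  map_smul' c A := by simp [Matrix.smul_mulVec]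

/-!
Counting the pairs `(A, u)` with `A ∈ M`, `A ≠ 0`, `u ≠ 0`, `A u = 0` by `u` and by `A` gives the
identity. Against it stands the bound `r(u) ≥ n + 1 - r`: as `dim M > n`, some nonzero `A ∈ M`
kills `u`, and then `B u ∈ im A` for all `B ∈ M`. Otherwise take a section `σ` of `A` over its image
and a projection `π` onto `im A` killing `B u`; since `rank (B + s A) ≤ r`, the map
`(w, c) ↦ (B + s A) (σ w + c u)` on the `(r + 1)`-dimensional `im A × F` has a kernel vector, which
is an eigenvector of `π B σ` for the eigenvalue `-s`. So all `q > r` scalars would be eigenvalues of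
an endomorphism of the `r`-dimensional space `im A`.
-/

open Matrix Module Finset

theorem Module.End.card_le_finrank_of_forall_hasEigenvalue {K V : Type*} [Field K] [Fintype K]
    [AddCommGroup V] [Module K V] [FiniteDimensional K V] (N : End K V)
    (h : ∀ a : K, N.HasEigenvalue a) : Fintype.card K ≤ finrank K V := by
  choose v hv using fun a => (h a).exists_hasEigenvector
  exact (N.eigenvectors_linearIndependent' id Function.injective_id v hv).fintype_card_le_finrank

theorem LinearMap.finrank_map_add_finrank_inf_ker {K V W : Type*} [Field K] [AddCommGroup V]
    [Module K V] [AddCommGroup W] [Module K W] (f : V →ₗ[K] W) (p : Submodule K V)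
    [FiniteDimensional K p] :
    finrank K (p.map f) + finrank K ↥(p ⊓ LinearMap.ker f) = finrank K p := by
  rw [← (f.domRestrict p).finrank_range_add_finrank_ker, LinearMap.range_domRestrict,
    LinearMap.ker_domRestrict, ← Submodule.map_comap_subtype, Submodule.finrank_map_subtype_eq]

theorem Submodule.card_filter_mem_and_ne_zero {K V : Type*} [Field K] [Fintype K]
    [AddCommGroup V] [Module K V] [Fintype V] [DecidableEq V] (P : Submodule K V)
    [DecidablePred (· ∈ P)] :
    #{x | x ∈ P ∧ x ≠ 0} = Fintype.card K ^ finrank K P - 1 := by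
  have : ({x | x ∈ P ∧ x ≠ 0} : Finset V) = ({x | x ∈ P} : Finset V).erase 0 := by
    ext; simp [and_comm]
  rw [this, card_erase_of_mem (by simp [P.zero_mem]), ← Fintype.card_subtype,
    card_eq_pow_finrank (K := K) (V := P)]

namespace LinearMap

variable {K V W : Type*} [Field K] [AddCommGroup V] [Module K V] [AddCommGroup W] [Module K W]
  [FiniteDimensional K W] {A B : V →ₗ[K] W} {u : V}

theorem hasEigenvalue_neg_of_finrank_range_add_smul_le (hu : A u = 0) (hBu : B u ∉ range A)
    {σ : range A →ₗ[K] V} (hσ : ∀ w, A (σ w) = w) {π : W →ₗ[K] range A}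
    (hπ : ∀ w : range A, π w = w) (hπu : π (B u) = 0) (s : K)
    (hs : finrank K (range (B + s • A)) ≤ finrank K (range A)) :
    Module.End.HasEigenvalue (π ∘ₗ B ∘ₗ σ) (-s) := by
  let Ψ : (range A × K) →ₗ[K] W := (B + s • A) ∘ₗ σ.coprod (toSpanSingleton K V u)
  have hΨ : ∀ w c, Ψ (w, c) = B (σ w) + s • (w : W) + c • B u := by
    intro w c
    simp only [Ψ, coe_comp, Function.comp_apply, coprod_apply, toSpanSingleton_apply, add_apply,
      map_add, map_smul, smul_apply, hσ, hu, smul_zero, add_zero]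
  have hker : ker Ψ ≠ ⊥ := by
    rw [← ker_rangeRestrict]
    apply ker_ne_bot_of_finrank_lt
    calc finrank K (range Ψ) ≤ finrank K (range (B + s • A)) :=
          Submodule.finrank_mono (range_comp_le_range _ _)
      _ < finrank K (range A × K) := by rw [finrank_prod, finrank_self]; omega
  obtain ⟨⟨w, c⟩, hwc, hne⟩ := Submodule.exists_mem_ne_zero_of_ne_bot hker
  rw [mem_ker, hΨ] at hwc
  have hw : w ≠ 0 := by
    rintro rfl
    have hc : c ≠ 0 := by simpa using hne
    have : c • B u = 0 := by simpa [hσ] using hwc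
    exact hBu ((smul_eq_zero.mp this).resolve_left hc ▸ zero_mem _)
  refine Module.End.hasEigenvalue_of_hasEigenvector (x := w) ⟨?_, hw⟩
  have := congrArg π hwc
  rw [map_add, map_add, map_smul, map_smul, hπu, hπ, smul_zero, add_zero, map_zero] at this
  rw [Module.End.mem_eigenspace_iff, neg_smul]
  exact eq_neg_of_add_eq_zero_left this

theorem apply_mem_range_of_finrank_range_add_smul_le [Fintype K] {r : ℕ}
    (hA : finrank K (range A) = r) (hAB : ∀ s : K, finrank K (range (B + s • A)) ≤ r)
    (hr : r < Fintype.card K) (hu : A u = 0) : B u ∈ range A := by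
  by_contra hBu
  obtain ⟨π, hπ, hπu⟩ := exists_extend_of_notMem (LinearMap.id : range A →ₗ[K] range A) hBu 0
  obtain ⟨σ, hσ⟩ := A.rangeRestrict.exists_rightInverse_of_surjective A.range_rangeRestrict
  have hN : ∀ a : K, Module.End.HasEigenvalue (π ∘ₗ B ∘ₗ σ) a := fun a => by
    simpa using hasEigenvalue_neg_of_finrank_range_add_smul_le hu hBu
      (fun w => congrArg Subtype.val (LinearMap.congr_fun hσ w)) (LinearMap.congr_fun hπ) hπu (-a)
      (hA ▸ hAB (-a))
  have := Module.End.card_le_finrank_of_forall_hasEigenvalue _ hN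
  omega

end LinearMap

section ConstantRank

variable {F : Type*} [Field F]

def Submodule.IsConstantRank {m n : Type*} [Fintype n]
    (M : Submodule F (Matrix m n F)) (r : ℕ) : Prop :=
  ∀ A ∈ M, A ≠ 0 → A.rank = r

theorem Submodule.IsConstantRank.rank_le {m n : Type*} [Fintype n] {M : Submodule F (Matrix m n F)}
    {r : ℕ} (hM : M.IsConstantRank r) {B : Matrix m n F} (hB : B ∈ M) : B.rank ≤ r := by
  rcases eq_or_ne B 0 with rfl | hB0
  · simp
  · exact (hM B hB hB0).le

variable [Fintype F] {n r : ℕ} {M : Submodule F (Matrix (Fin n) (Fin n) F)}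

namespace Submodule.IsConstantRank

theorem finrank_map_mulVecRight_le (hM : M.IsConstantRank r) (hr : r < Fintype.card F)
    {A : Matrix (Fin n) (Fin n) F} (hAM : A ∈ M) (hA : A ≠ 0) {u : Fin n → F} (hAu : A *ᵥ u = 0) :
    finrank F (M.map (mulVecRight F n u)) ≤ r := by
  have hrange : M.map (mulVecRight F n u) ≤ LinearMap.range A.mulVecLin := by
    rintro _ ⟨B, hB, rfl⟩
    refine LinearMap.apply_mem_range_of_finrank_range_add_smul_le (B := B.mulVecLin)
      (hM A hAM hA) (fun s => ?_) hr hAu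
    have : B.mulVecLin + s • A.mulVecLin = (B + s • A).mulVecLin := by simp
    rw [this]
    exact hM.rank_le (M.add_mem hB (M.smul_mem s hAM))
  exact (Submodule.finrank_mono hrange).trans (hM A hAM hA).le

theorem finrank_sub_le_finrank_inf_ker (hM : M.IsConstantRank r) (hr : r < Fintype.card F)
    (hdim : n < finrank F M) (u : Fin n → F) :
    finrank F M - r ≤ finrank F ↥(M ⊓ LinearMap.ker (mulVecRight F n u)) := by
  have hsum := (mulVecRight F n u).finrank_map_add_finrank_inf_ker M
  have hmap : finrank F (M.map (mulVecRight F n u)) ≤ n :=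
    (Submodule.finrank_le _).trans (finrank_fin_fun F).le
  obtain ⟨A, ⟨hAM, hAu⟩, hA⟩ := Submodule.exists_mem_ne_zero_of_ne_bot <|
    Submodule.one_le_finrank_iff.mp
      (show 1 ≤ finrank F ↥(M ⊓ LinearMap.ker (mulVecRight F n u)) by omega)
  have := hM.finrank_map_mulVecRight_le hr hAM hA hAu
  omega

theorem sum_card_pow_finrank_inf_ker_sub_one [DecidableEq F] (hM : M.IsConstantRank r) :
    ∑ u ∈ Finset.univ.filter (fun u : Fin n → F => u ≠ 0),
        (Fintype.card F ^ finrank F ↥(M ⊓ LinearMap.ker (mulVecRight F n u)) - 1) =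
      (Fintype.card F ^ finrank F M - 1) * (Fintype.card F ^ (n - r) - 1) := by
  classical
  let T : Finset (Matrix (Fin n) (Fin n) F) := {A | A ∈ M ∧ A ≠ 0}
  let kills : (Fin n → F) → Matrix (Fin n) (Fin n) F → Prop := fun u A => A *ᵥ u = 0
  have habove : ∀ u, #(T.bipartiteAbove kills u) =
      Fintype.card F ^ finrank F ↥(M ⊓ LinearMap.ker (mulVecRight F n u)) - 1 := by
    intro u
    rw [← Submodule.card_filter_mem_and_ne_zero]
    congr 1
    ext A
    simp only [T, kills, bipartiteAbove, mulVecRight, ne_eq, mem_filter, mem_univ, true_and,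
      Submodule.mem_inf, LinearMap.mem_ker, LinearMap.coe_mk, AddHom.coe_mk]
    tauto
  have hbelow : ∀ A ∈ T, #((univ.filter (fun u : Fin n → F => u ≠ 0)).bipartiteBelow kills A) =
      Fintype.card F ^ (n - r) - 1 := by
    intro A hA
    simp only [T, mem_filter, mem_univ, true_and] at hA
    have hker : finrank F (LinearMap.ker A.mulVecLin) = n - r := by
      have := A.mulVecLin.finrank_range_add_finrank_ker
      rw [finrank_fin_fun] at this
      have := hM A hA.1 hA.2
      rw [Matrix.rank] at this
      omega
    rw [← hker, ← Submodule.card_filter_mem_and_ne_zero]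
    congr 1
    ext v
    simp only [kills, bipartiteBelow, ne_eq, mem_filter, mem_univ, true_and, LinearMap.mem_ker,
      mulVecBilin_apply]
    tauto
  rw [sum_congr rfl (fun u _ => (habove u).symm),
    sum_card_bipartiteAbove_eq_sum_card_bipartiteBelow, sum_congr rfl hbelow, sum_const,
    smul_eq_mul, M.card_filter_mem_and_ne_zero]

end Submodule.IsConstantRank

end ConstantRank

theorem pow_succ_sub_one_mul_lt {q n r : ℕ} (hq : 2 ≤ q) (hr : 1 ≤ r) (hrn : r ≤ n) :
    (q ^ (n + 1) - 1) * (q ^ (n - r) - 1) < (q ^ n - 1) * (q ^ (n + 1 - r) - 1) := by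
  obtain ⟨m, rfl⟩ := Nat.exists_eq_add_of_le hrn
  rw [show r + m + 1 - r = m + 1 by omega, show r + m - r = m by omega]
  have h1 : 1 ≤ q ^ m := Nat.one_le_pow _ _ (by omega)
  have h2 : 2 ≤ q ^ r := (Nat.le_self_pow (by omega) q).trans' hq
  rw [pow_succ, pow_succ, pow_add]
  generalize q ^ m = a at *
  generalize q ^ r = b at *
  have : 1 ≤ a * q := Nat.one_le_iff_ne_zero.mpr (by positivity)
  have : 1 ≤ b * a := Nat.one_le_iff_ne_zero.mpr (by positivity)
  have : 1 ≤ b * a * q := Nat.one_le_iff_ne_zero.mpr (by positivity)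
  zify [h1, *]
  -- the difference of the two sides is `a (q - 1) (b - 1)`
  nlinarith [mul_pos (mul_pos (show (0 : ℤ) < a by linarith) (show (0 : ℤ) < b - 1 by linarith))
    (show (0 : ℤ) < q - 1 by linarith)]

theorem stmt16_general (q n r : ℕ)
    (F : Type*) [Field F] [Fintype F] [DecidableEq F] (hF : Fintype.card F = q)
    (hr1 : 1 ≤ r) (hrn : r < n) (hqr : r + 1 ≤ q)
    (M : Submodule F (Matrix (Fin n) (Fin n) F))
    (hconst : ∀ A ∈ M, A ≠ 0 → Matrix.rank A = r)
    (hdim : Module.finrank F M = n + 1) :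
    (∑ u ∈ Finset.univ.filter (fun u : Fin n → F => u ≠ 0),
        (q ^ (Module.finrank F ↥(M ⊓ LinearMap.ker (mulVecRight F n u))) - 1) =
      (q ^ (n + 1) - 1) * (q ^ (n - r) - 1)) ∧ False := by
  have hM : M.IsConstantRank r := hconst
  subst hF
  have hsum := hM.sum_card_pow_finrank_inf_ker_sub_one
  rw [hdim] at hsum
  refine ⟨hsum, ?_⟩
  have hker : ∀ u : Fin n → F,
      n + 1 - r ≤ finrank F ↥(M ⊓ LinearMap.ker (mulVecRight F n u)) := fun u => by
    simpa [hdim] using hM.finrank_sub_le_finrank_inf_ker (by omega) (by omega) u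
  have hnonzero : #(univ.filter fun u : Fin n → F => u ≠ 0) = Fintype.card F ^ n - 1 := by
    rw [filter_ne', card_erase_of_mem (mem_univ _), card_univ, Fintype.card_fun, Fintype.card_fin]
  have hlower : (Fintype.card F ^ n - 1) * (Fintype.card F ^ (n + 1 - r) - 1) ≤
      (Fintype.card F ^ (n + 1) - 1) * (Fintype.card F ^ (n - r) - 1) := by
    rw [← hnonzero, ← smul_eq_mul, ← hsum]
    exact card_nsmul_le_sum _ _ _ fun u _ =>
      Nat.sub_le_sub_right (Nat.pow_le_pow_right Fintype.card_pos (hker u)) 1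
  exact (pow_succ_sub_one_mul_lt (by omega) hr1 hrn.le).not_ge hlower

/-- Let q be a prime power with q ≥ r + 1, and M a constant rank r
subspace of M_n(F_q) with 1 ≤ r < n and dim M = n + 1. Then summing (q^{r(u)} − 1)
over all nonzero u, where r(u) = dim {A ∈ M : Au = 0}, yields
(q^{n+1} − 1)(q^{n−r} − 1); this leads to a contradiction, so no such M exists. -/
theorem stmt16 (q n r : ℕ) (hq : IsPrimePow q)
    (F : Type*) [Field F] [Fintype F] [DecidableEq F] (hF : Fintype.card F = q)
    (hr1 : 1 ≤ r) (hrn : r < n) (hqr : r + 1 ≤ q)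
    (M : Submodule F (Matrix (Fin n) (Fin n) F)) (hM : M ≠ ⊥)
    (hconst : ∀ A ∈ M, A ≠ 0 → Matrix.rank A = r)
    (hdim : Module.finrank F M = n + 1) :
    (∑ u ∈ Finset.univ.filter (fun u : Fin n → F => u ≠ 0),
        (q ^ (Module.finrank F ↥(M ⊓ LinearMap.ker (mulVecRight F n u))) - 1) =
      (q ^ (n + 1) - 1) * (q ^ (n - r) - 1)) ∧ False :=
  stmt16_general q n r F hF hr1 hrn hqr M hconst hdim
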